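/- arXiv:2411.06571 — 3 statements merged into one kernel-verified Lean document; each statement's English description precedes it below -/
import Mathlib

section
/- Suppose the family G satisfies conditions (1), (2), and (3_2). For rational t > 0 define X_t := e^{−t/2} G_{0,t}, and let F_t be the σ-algebra generated by the random variables G_{u,v} for rationals 0 ≤ u ≤ v ≤ t. Then (X_t) is a martingale: each X_t is integrable, and for all rationals 0 < s ≤ t one has E[X_t | F_s] = X_s almost surely. -/
open MeasureTheory ProbabilityTheory Filter

/-- Condition (1): variables indexed by pairwise disjoint open rational intervals are
jointly independent. -/
def Cond1 {Ω : Type*} [MeasurableSpace Ω] (P : Measure Ω) (G : ℚ → ℚ → Ω → ℝ) : Prop :=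
  ∀ (k : ℕ) (s t : Fin k → ℚ), (∀ i, s i < t i) →
    (Pairwise fun i j => Disjoint (Set.Ioo (s i) (t i)) (Set.Ioo (s j) (t j))) →
    iIndepFun (fun i ω => G (s i) (t i) ω) P

/-- Condition (2): the flow property `G_{s,t} G_{t,u} = G_{s,u}` almost surely. -/
def Cond2 {Ω : Type*} [MeasurableSpace Ω] (P : Measure Ω) (G : ℚ → ℚ → Ω → ℝ) : Prop :=
  ∀ s t u : ℚ, s < t → t < u → (fun ω => G s t ω * G t u ω) =ᵐ[P] G s u

/-- Condition (3_N): moments `E[G_{s,t}^n] = exp(n²(t-s)/2)` for `1 ≤ n ≤ N`. -/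
def Cond3 {Ω : Type*} [MeasurableSpace Ω] (P : Measure Ω) (G : ℚ → ℚ → Ω → ℝ) (N : ℕ) : Prop :=
  ∀ n : ℕ, 1 ≤ n → n ≤ N → ∀ s t : ℚ, s ≤ t →
    ∫ ω, (G s t ω) ^ n ∂P = Real.exp ((n : ℝ) ^ 2 / 2 * ((t : ℝ) - (s : ℝ)))

/-- The σ-algebra generated by the random variables `G_{u,v}` for rationals
`0 ≤ u ≤ v ≤ t`. -/
def flowFiltration {Ω : Type*} (G : ℚ → ℚ → Ω → ℝ) (t : ℚ) : MeasurableSpace Ω :=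
  ⨆ (u : ℚ) (v : ℚ) (_ : 0 ≤ u) (_ : u ≤ v) (_ : v ≤ t),
    MeasurableSpace.comap (G u v) inferInstance


/-!
For `s < t` the increment `G_{s,t}` is independent of `F_s`. Indeed, finitely many generators
`G_{u,v}` of `F_s` are, by the flow property, almost surely products of the increments
`G_{x,x'}` over the consecutive points `x < x'` of a common finite partition of `[0, s]` (with
`G_{u,u} = 1` almost surely, since its first two moments are `1`); those intervals and `(s, t)`
are pairwise disjoint, so condition (1) applies. Pulling out the `F_s`-measurable factor `X_s`
then gives `E[X_t | F_s] = X_s · e^{-(t-s)/2} E[G_{s,t}] = X_s`.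
-/

namespace ProbabilityTheory

variable {Ω : Type*} {m0 : MeasurableSpace Ω} {P : Measure Ω}

lemma Indep.comap_of_ae_eq {β : Type*} [MeasurableSpace β] {m : MeasurableSpace Ω}
    {f g : Ω → β} (h : Indep (.comap g inferInstance) m P) (hfg : f =ᵐ[P] g) :
    Indep (.comap f inferInstance) m P := by
  rw [Indep_iff] at h ⊢
  rintro _ A ⟨B, hB, rfl⟩ hA
  have hpre : f ⁻¹' B =ᵐ[P] g ⁻¹' B := hfg.preimage B
  rw [measure_congr hpre, measure_congr (hpre.inter (ae_eq_refl A))]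
  exact h _ A ⟨B, hB, rfl⟩ hA

lemma indep_iSup_comap_of_aestronglyMeasurable {ι : Type*} [Countable ι]
    {m m' : MeasurableSpace Ω} (h : Indep m' m P) {f : ι → Ω → ℝ}
    (hf : ∀ i, AEStronglyMeasurable[m'] (f i) P) :
    Indep (⨆ i, .comap (f i) inferInstance) m P := by
  have hmk_meas : Measurable[m'] fun ω i => (hf i).mk (f i) ω :=
    measurable_pi_lambda _ fun i => (hf i).stronglyMeasurable_mk.measurable
  have hmk : Indep (.comap (fun ω i => (hf i).mk (f i) ω) inferInstance) m P :=
    indep_of_indep_of_le_left h hmk_meas.comap_le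
  have hvec := hmk.comap_of_ae_eq (f := fun ω i => f i ω) <| by
    filter_upwards [ae_all_iff.2 fun i => (hf i).ae_eq_mk] with ω hω
    exact funext hω
  simpa only [MeasurableSpace.pi, MeasurableSpace.comap_iSup, MeasurableSpace.comap_comp,
    Function.comp_def] using hvec

lemma condExp_mul_eq_mul_integral_of_indep {m : MeasurableSpace Ω} (hm : m ≤ m0)
    [SigmaFinite (P.trim hm)] {f g : Ω → ℝ} (hf : StronglyMeasurable[m] f)
    (hg : Measurable[m0] g) (hfg : Integrable (f * g) P) (hgi : Integrable g P)
    (hind : Indep (.comap g inferInstance) m P) :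
    P[f * g | m] =ᵐ[P] fun ω => f ω * P[g] :=
  (condExp_mul_of_stronglyMeasurable_left hf hfg hgi).trans <| .mul .rfl <|
    condExp_indep_eq hg.comap_le hm (comap_measurable g).stronglyMeasurable hind

end ProbabilityTheory

namespace Finset

variable {α : Type*} [LinearOrder α] (T : Finset α) (t : α) {x y : α}

def nextAbove (x : α) : α :=
  if h : (T.filter (x < ·)).Nonempty then (T.filter (x < ·)).min' h else t

lemma lt_nextAbove (hx : x < t) : x < T.nextAbove t x := by
  unfold nextAbove
  split_ifs with h
  · exact (mem_filter.1 ((T.filter (x < ·)).min'_mem h)).2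
  · exact hx

lemma nextAbove_le (hy : y ∈ T) (hxy : x < y) : T.nextAbove t x ≤ y := by
  have h : (T.filter (x < ·)).Nonempty := ⟨y, mem_filter.2 ⟨hy, hxy⟩⟩
  rw [nextAbove, dif_pos h]
  exact min'_le _ _ (mem_filter.2 ⟨hy, hxy⟩)

lemma nextAbove_mem_filter (hy : y ∈ T) (hxy : x < y) :
    T.nextAbove t x ∈ T.filter (x < ·) := by
  have h : (T.filter (x < ·)).Nonempty := ⟨y, mem_filter.2 ⟨hy, hxy⟩⟩
  rw [nextAbove, dif_pos h]
  exact min'_mem _ h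

lemma nextAbove_of_forall_le (h : ∀ y ∈ T, y ≤ x) : T.nextAbove t x = t := by
  rw [nextAbove, dif_neg]
  rintro ⟨y, hy⟩
  exact (mem_filter.1 hy).2.not_ge (h y (mem_filter.1 hy).1)

lemma pairwise_disjoint_Ioo_nextAbove :
    Pairwise fun x y : T => Disjoint (Set.Ioo (x : α) (T.nextAbove t x))
      (Set.Ioo (y : α) (T.nextAbove t y)) := by
  have key : ∀ x y : T, x < y → Disjoint (Set.Ioo (x : α) (T.nextAbove t x))
      (Set.Ioo (y : α) (T.nextAbove t y)) := fun x y hxy =>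
    Set.disjoint_left.2 fun z hzx hzy =>
      (hzx.2.trans_le (T.nextAbove_le t y.2 hxy)).not_gt hzy.1
  intro x y hxy
  rcases hxy.lt_or_gt with h | h
  · exact key x y h
  · exact (key y x h).symm

end Finset

section Flow

variable {Ω : Type*} {m0 : MeasurableSpace Ω} {P : Measure Ω} {G : ℚ → ℚ → Ω → ℝ}

lemma Cond1.iIndepFun {ι : Type*} [Fintype ι] (h1 : Cond1 P G) (a b : ι → ℚ)
    (hab : ∀ i, a i < b i)
    (hdisj : Pairwise fun i j => Disjoint (Set.Ioo (a i) (b i)) (Set.Ioo (a j) (b j))) :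
    iIndepFun (fun i ω => G (a i) (b i) ω) P := by
  let e := Fintype.equivFin ι
  have h := h1 _ (a ∘ e.symm) (b ∘ e.symm) (fun j => hab _)
    fun j k hjk => hdisj (e.symm.injective.ne hjk)
  simpa [Function.comp_def] using h.precomp e.injective

lemma Cond3.memLp_two (h3 : Cond3 P G 2) {s t : ℚ} (hG : AEStronglyMeasurable (G s t) P)
    (hst : s ≤ t) : MemLp (G s t) 2 P :=
  (memLp_two_iff_integrable_sq hG).2 <| Integrable.of_integral_ne_zero <| by
    rw [h3 2 one_le_two le_rfl s t hst]
    exact (Real.exp_pos _).ne'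

lemma Cond3.integrable [IsFiniteMeasure P] (h3 : Cond3 P G 2) {s t : ℚ}
    (hG : AEStronglyMeasurable (G s t) P) (hst : s ≤ t) : Integrable (G s t) P :=
  (h3.memLp_two hG hst).integrable one_le_two

lemma Cond3.integral_eq (h3 : Cond3 P G 2) {s t : ℚ} (hst : s ≤ t) :
    ∫ ω, G s t ω ∂P = Real.exp (((t : ℝ) - s) / 2) := by
  have h := h3 1 le_rfl one_le_two s t hst
  simp only [pow_one, Nat.cast_one, one_pow] at h
  rw [h]
  ring_nf

lemma Cond3.ae_eq_one [IsProbabilityMeasure P] (h3 : Cond3 P G 2) {u : ℚ}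
    (hG : AEStronglyMeasurable (G u u) P) : G u u =ᵐ[P] 1 := by
  have hL2 := h3.memLp_two hG le_rfl
  have hvar : Var[G u u; P] = 0 := by
    rw [variance_eq_sub hL2]
    simp [h3.integral_eq le_rfl, h3 2 one_le_two le_rfl u u le_rfl]
  filter_upwards [ae_eq_integral_of_variance_eq_zero hL2 hvar] with ω hω
  simpa [h3.integral_eq le_rfl] using hω

open Finset in
lemma Cond2.aestronglyMeasurable_of_partition (h2 : Cond2 P G) {m' : MeasurableSpace Ω}
    {T : Finset ℚ} {t : ℚ}
    (hnext : ∀ x ∈ T, ∀ y ∈ T, x < y → Measurable[m'] (G x (T.nextAbove t x))) :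
    ∀ u ∈ T, ∀ v ∈ T, u < v → AEStronglyMeasurable[m'] (G u v) P := by
  suffices ∀ n, ∀ u ∈ T, #(T.filter (u < ·)) = n →
      ∀ v ∈ T, u < v → AEStronglyMeasurable[m'] (G u v) P from
    fun u hu => this _ u hu rfl
  intro n
  induction n using Nat.strong_induction_on with
  | _ n ih =>
  rintro u hu rfl v hv huv
  set w := T.nextAbove t u
  obtain ⟨hw, huw⟩ : w ∈ T ∧ u < w := mem_filter.1 (T.nextAbove_mem_filter t hv huv)
  have hGuw : AEStronglyMeasurable[m'] (G u w) P :=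
    (hnext u hu v hv huv).stronglyMeasurable.aestronglyMeasurable
  rcases (T.nextAbove_le t hv huv).eq_or_lt with hwv | hwv
  · rwa [← hwv]
  have hcard : #(T.filter (w < ·)) < #(T.filter (u < ·)) := by
    refine card_lt_card ((ssubset_iff_of_subset ?_).2 ⟨w, ?_, ?_⟩)
    · exact monotone_filter_right _ fun x _ hwx => huw.trans hwx
    · exact mem_filter.2 ⟨hw, huw⟩
    · simp
  exact (hGuw.mul (ih _ hcard w hw rfl v hv hwv)).congr (h2 u w v huw hwv)

lemma Cond1.indep_increments (h1 : Cond1 P G) (hmeas : ∀ s t : ℚ, Measurable (G s t))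
    {T : Finset ℚ} {s t : ℚ} (hsT : s ∈ T) (hT : ∀ x ∈ T, x ≤ s) (hst : s < t) :
    Indep (⨆ x ∈ {x : T | (x : ℚ) ≠ s}, .comap (G x (T.nextAbove t x)) inferInstance)
      (.comap (G s t) inferInstance) P := by
  have hind := h1.iIndepFun (fun x : T => (x : ℚ)) (fun x => T.nextAbove t x)
    (fun x => T.lt_nextAbove t ((hT x x.2).trans_lt hst)) (T.pairwise_disjoint_Ioo_nextAbove t)
  have h := indep_iSup_of_disjoint (fun x => (hmeas _ _).comap_le)
    ((iIndepFun_iff_iIndep _ _ _).1 hind)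
    (S := {x : T | (x : ℚ) ≠ s}) (T := {⟨s, hsT⟩})
    (Set.disjoint_singleton_right.2 fun hs => hs rfl)
  rwa [_root_.iSup_singleton, T.nextAbove_of_forall_le t hT] at h

variable (G) in
abbrev flowSigmaOn (T : Finset ℚ) : MeasurableSpace Ω :=
  ⨆ p : {p : ℚ × ℚ // p.1 ∈ T ∧ p.2 ∈ T ∧ p.1 ≤ p.2},
    MeasurableSpace.comap (G p.1.1 p.1.2) inferInstance

lemma flowSigmaOn_mono {T T' : Finset ℚ} (h : T ⊆ T') : flowSigmaOn G T ≤ flowSigmaOn G T' :=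
  iSup_le fun p => le_iSup_of_le ⟨p.1, h p.2.1, h p.2.2.1, p.2.2.2⟩ le_rfl

lemma indep_flowSigmaOn [IsProbabilityMeasure P] (h1 : Cond1 P G) (h2 : Cond2 P G)
    (h3 : Cond3 P G 2) (hmeas : ∀ s t : ℚ, Measurable (G s t)) {T : Finset ℚ} {s t : ℚ}
    (hsT : s ∈ T) (hT : ∀ x ∈ T, x ≤ s) (hst : s < t) :
    Indep (flowSigmaOn G T) (.comap (G s t) inferInstance) P := by
  have hnext : ∀ x ∈ T, ∀ y ∈ T, x < y → Measurable[⨆ x ∈ {x : T | (x : ℚ) ≠ s},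
      .comap (G x (T.nextAbove t x)) inferInstance] (G x (T.nextAbove t x)) :=
    fun x hx y hy hxy => (comap_measurable _).mono
      (le_iSup₂_of_le (⟨x, hx⟩ : T) (hxy.trans_le (hT y hy)).ne le_rfl) le_rfl
  refine indep_iSup_comap_of_aestronglyMeasurable (h1.indep_increments hmeas hsT hT hst)
    fun ⟨(u, v), hu, hv, huv⟩ => ?_
  dsimp only at hu hv huv ⊢
  rcases huv.eq_or_lt with rfl | huv
  · exact aestronglyMeasurable_const.congr
      (h3.ae_eq_one (hmeas u u).aestronglyMeasurable).symm
  · exact h2.aestronglyMeasurable_of_partition hnext u hu v hv huv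

lemma flowFiltration_le (hmeas : ∀ s t : ℚ, Measurable (G s t)) (s : ℚ) :
    flowFiltration G s ≤ m0 := by
  simp only [flowFiltration, iSup_le_iff]
  exact fun u v _ _ _ => (hmeas u v).comap_le

lemma measurable_flowFiltration {u v s : ℚ} (hu : 0 ≤ u) (huv : u ≤ v) (hvs : v ≤ s) :
    Measurable[flowFiltration G s] (G u v) :=
  measurable_iff_comap_le.2 <| le_iSup₂_of_le u v <| le_iSup₂_of_le hu huv <|
    le_iSup_of_le hvs le_rfl

lemma flowFiltration_le_iSup_flowSigmaOn (s : ℚ) :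
    flowFiltration G s ≤
      ⨆ T : {T : Finset ℚ // s ∈ T ∧ ∀ x ∈ T, x ≤ s}, flowSigmaOn G T := by
  simp only [flowFiltration, iSup_le_iff]
  intro u v _ huv hvs
  refine le_iSup_of_le ⟨{s, u, v}, by simp, ?_⟩ <|
    le_iSup_of_le (⟨(u, v), by simp, by simp, huv⟩ : {p : ℚ × ℚ // _}) le_rfl
  simp only [Finset.mem_insert, Finset.mem_singleton, forall_eq_or_imp, forall_eq]
  exact ⟨le_rfl, huv.trans hvs, hvs⟩

lemma indep_flowFiltration [IsProbabilityMeasure P] (h1 : Cond1 P G) (h2 : Cond2 P G)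
    (h3 : Cond3 P G 2) (hmeas : ∀ s t : ℚ, Measurable (G s t)) {s t : ℚ} (hst : s < t) :
    Indep (flowFiltration G s) (.comap (G s t) inferInstance) P := by
  refine indep_of_indep_of_le_left ?_ (flowFiltration_le_iSup_flowSigmaOn s)
  refine indep_iSup_of_directed_le (fun T => indep_flowSigmaOn h1 h2 h3 hmeas T.2.1 T.2.2 hst)
    (fun T => iSup_le fun _ => (hmeas _ _).comap_le) (hmeas s t).comap_le ?_
  intro T T'
  refine ⟨⟨T.1 ∪ T'.1, Finset.mem_union_left _ T.2.1, fun x hx => ?_⟩,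
    flowSigmaOn_mono Finset.subset_union_left, flowSigmaOn_mono Finset.subset_union_right⟩
  exact (Finset.mem_union.1 hx).elim (T.2.2 x) (T'.2.2 x)

end Flow

/-- Under conditions (1), (2), (3_2), the process `X_t := e^{-t/2} G_{0,t}` is a martingale
with respect to the filtration generated by the flow. -/
theorem geometric_brownian_flow_martingale
    {Ω : Type*} [MeasurableSpace Ω] (P : Measure Ω) [IsProbabilityMeasure P]
    (G : ℚ → ℚ → Ω → ℝ) (hmeas : ∀ s t : ℚ, Measurable (G s t))
    (h1 : Cond1 P G) (h2 : Cond2 P G) (h3 : Cond3 P G 2)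
    (X : ℚ → Ω → ℝ) (hX : ∀ t ω, X t ω = Real.exp (-(t : ℝ) / 2) * G 0 t ω) :
    (∀ t : ℚ, 0 < t → Integrable (X t) P) ∧
      ∀ s t : ℚ, 0 < s → s ≤ t →
        P[X t | flowFiltration G s] =ᵐ[P] X s := by
  have hint : ∀ t : ℚ, 0 ≤ t → Integrable (X t) P := fun t ht => by
    rw [funext (hX t)]
    exact (h3.integrable (hmeas 0 t).aestronglyMeasurable ht).const_mul _
  refine ⟨fun t ht => hint t ht.le, fun s t hs hst => ?_⟩
  have hle := flowFiltration_le hmeas s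
  have hXs : StronglyMeasurable[flowFiltration G s] (X s) := by
    rw [funext (hX s)]
    exact ((measurable_flowFiltration le_rfl hs.le le_rfl).const_mul _).stronglyMeasurable
  rcases hst.eq_or_lt with rfl | hlt
  · rw [condExp_of_stronglyMeasurable hle hXs (hint s hs.le)]
  set g : Ω → ℝ := fun ω => Real.exp (-((t : ℝ) - s) / 2) * G s t ω
  have hXt : X t =ᵐ[P] X s * g := by
    filter_upwards [h2 0 s t hs hlt] with ω hω
    rw [Pi.mul_apply, hX, hX, ← hω, show -(t : ℝ) / 2 = -s / 2 + -(t - s) / 2 by ring,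
      Real.exp_add]
    ring
  have hg : ∫ ω, g ω ∂P = 1 := by
    rw [integral_const_mul, h3.integral_eq hlt.le, ← Real.exp_add, ← Real.exp_zero]
    congr 1
    ring
  have hind : Indep (.comap g inferInstance) (flowFiltration G s) P :=
    indep_of_indep_of_le_left (indep_flowFiltration h1 h2 h3 hmeas hlt).symm
      ((comap_measurable (G s t)).const_mul _).comap_le
  calc P[X t | flowFiltration G s] =ᵐ[P] P[X s * g | flowFiltration G s] := condExp_congr_ae hXt
    _ =ᵐ[P] fun ω => X s ω * ∫ ω, g ω ∂P :=
      condExp_mul_eq_mul_integral_of_indep hle hXs ((hmeas s t).const_mul _)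
        ((hint t (hs.le.trans hlt.le)).congr hXt)
        ((h3.integrable (hmeas s t).aestronglyMeasurable hlt.le).const_mul _)
        hind
    _ = X s := by simp [hg]
end

section
/- Suppose the family G satisfies conditions (1), (2), and (3_6). Then for every T > 0 there exists a constant C_T < ∞ such that for all rationals 0 ≤ s ≤ t ≤ T one has E[|G_{0,t} − G_{0,s}|³] ≤ C_T · |t − s|^{3/2}. -/
open MeasureTheory ProbabilityTheory Filter

/-!
On `0 < s < t`, the flow property gives `G₀ₜ - G₀ₛ = G₀ₛ (Gₛₜ - 1)` a.s., and by independence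
`E|G₀ₜ - G₀ₛ|³ = E|G₀ₛ|³ · E|Gₛₜ - 1|³`; at `s = 0` the same holds because `G₀₀` has mean and
second moment `1`, hence `G₀₀ = 1` a.s. The first factor is bounded by the fourth moment. For the
second, the moment formula makes `E(Gₛₜ - 1)⁴` an exponential polynomial in `d = t - s` vanishing
to second order at `d = 0`, so it is `O(d²)`, and Young's inequality `4b|x|³ ≤ 3x⁴ + b⁴` with
`b = √d` turns this into `E|Gₛₜ - 1|³ = O(d^{3/2})`.
-/

namespace Real

theorem exp_sub_one_le_mul_exp (y : ℝ) : exp y - 1 ≤ y * exp y := by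
  have h : (1 - y) * exp y ≤ exp (-y) * exp y :=
    mul_le_mul_of_nonneg_right (one_sub_le_exp_neg y) (exp_pos y).le
  rw [← exp_add, neg_add_cancel, exp_zero] at h
  linarith

theorem exp_sub_one_sub_le_sq_mul_exp {y : ℝ} (hy : 0 ≤ y) : exp y - 1 - y ≤ y ^ 2 * exp y := by
  have h := exp_sub_one_le_mul_exp y
  have hy' : y * (exp y - 1) ≤ y * (y * exp y) := mul_le_mul_of_nonneg_left h hy
  linarith

end Real

theorem four_mul_mul_abs_pow_three_le (x b : ℝ) : 4 * b * |x| ^ 3 ≤ 3 * x ^ 4 + b ^ 4 := by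
  have hx4 : x ^ 4 = |x| ^ 4 := (Even.pow_abs ⟨2, rfl⟩ x).symm
  -- `3y⁴ - 4by³ + b⁴ = (y - b)²(2y² + (y + b)²)`
  have key : 0 ≤ (|x| - b) ^ 2 * (2 * |x| ^ 2 + (|x| + b) ^ 2) := by positivity
  rw [hx4]
  linarith [key]

open Real in
theorem exp_fourth_central_moment_le {d T : ℝ} (hd : 0 ≤ d) (hdT : d ≤ T) :
    exp (8 * d) - 4 * exp (9 / 2 * d) + 6 * exp (2 * d) - 4 * exp (1 / 2 * d) + 1
      ≤ 88 * exp (8 * T) * d ^ 2 := by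
  -- Constant and linear terms cancel, so the left side is `∑ cₖ (exp (λₖ d) - 1 - λₖ d)`.
  have h8 := exp_sub_one_sub_le_sq_mul_exp (by positivity : 0 ≤ 8 * d)
  have h2 := exp_sub_one_sub_le_sq_mul_exp (by positivity : 0 ≤ 2 * d)
  have l9 := add_one_le_exp (9 / 2 * d)
  have l1 := add_one_le_exp (1 / 2 * d)
  have e8 : exp (8 * d) ≤ exp (8 * T) := exp_le_exp.mpr (by linarith)
  have e2 : exp (2 * d) ≤ exp (8 * T) := exp_le_exp.mpr (by linarith)
  have hd2 := sq_nonneg d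
  linarith [mul_le_mul_of_nonneg_left e8 hd2, mul_le_mul_of_nonneg_left e2 hd2]

namespace Cond3

variable {Ω : Type*} [MeasurableSpace Ω] {P : Measure Ω} {G : ℚ → ℚ → Ω → ℝ} {N n : ℕ}
  {u v : ℚ}

theorem integrable_pow [IsFiniteMeasure P] (h3 : Cond3 P G N) (hnN : n ≤ N) (huv : u ≤ v) :
    Integrable (fun ω => G u v ω ^ n) P := by
  rcases Nat.eq_zero_or_pos n with rfl | hn
  · simp
  by_contra hint
  have := h3 n hn hnN u v huv
  rw [integral_undef hint] at this
  exact (Real.exp_pos _).ne' this.symm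

theorem integral_pow [IsProbabilityMeasure P] (h3 : Cond3 P G N) (hnN : n ≤ N) (huv : u ≤ v) :
    ∫ ω, G u v ω ^ n ∂P = Real.exp ((n : ℝ) ^ 2 / 2 * ((v : ℝ) - (u : ℝ))) := by
  rcases Nat.eq_zero_or_pos n with rfl | hn
  · simp
  exact h3 n hn hnN u v huv

theorem aestronglyMeasurable [IsFiniteMeasure P] (h3 : Cond3 P G N) (hN : 1 ≤ N) (huv : u ≤ v) :
    AEStronglyMeasurable (G u v) P := by
  simpa using (h3.integrable_pow hN huv).aestronglyMeasurable

theorem integrable_sub_one_pow [IsFiniteMeasure P] (h3 : Cond3 P G N) (hnN : n ≤ N)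
    (huv : u ≤ v) : Integrable (fun ω => (G u v ω - 1) ^ n) P := by
  simp_rw [sub_pow, one_pow, mul_one]
  refine integrable_finsetSum _ fun m hm => ?_
  have hmN : m ≤ N := (Finset.mem_range_succ_iff.mp hm).trans hnN
  exact ((h3.integrable_pow hmN huv).const_mul _).mul_const _

theorem integral_sub_one_pow [IsProbabilityMeasure P] (h3 : Cond3 P G N) (hnN : n ≤ N)
    (huv : u ≤ v) :
    ∫ ω, (G u v ω - 1) ^ n ∂P = ∑ m ∈ Finset.range (n + 1),
      (-1) ^ (m + n) * Real.exp ((m : ℝ) ^ 2 / 2 * ((v : ℝ) - (u : ℝ))) * n.choose m := by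
  simp_rw [sub_pow, one_pow, mul_one]
  have hmN : ∀ m ∈ Finset.range (n + 1), m ≤ N :=
    fun m hm => (Finset.mem_range_succ_iff.mp hm).trans hnN
  rw [integral_finsetSum _ fun m hm => ((h3.integrable_pow (hmN m hm) huv).const_mul _).mul_const _]
  refine Finset.sum_congr rfl fun m hm => ?_
  rw [integral_mul_const, integral_const_mul, h3.integral_pow (hmN m hm) huv]

theorem ae_eq_one_s4 [IsProbabilityMeasure P] (h3 : Cond3 P G N) (hN : 2 ≤ N) (u : ℚ) :
    G u u =ᵐ[P] 1 := by
  have hvar : ∫ ω, (G u u ω - 1) ^ 2 ∂P = 0 := by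
    rw [h3.integral_sub_one_pow hN le_rfl]
    norm_num [Finset.sum_range_succ]
  have hsq := (integral_eq_zero_iff_of_nonneg (fun ω => sq_nonneg (G u u ω - 1))
    (h3.integrable_sub_one_pow hN le_rfl)).mp hvar
  filter_upwards [hsq] with ω hω
  simpa [sub_eq_zero] using hω

theorem integral_sub_one_pow_four_le [IsProbabilityMeasure P] (h3 : Cond3 P G N) (hN : 4 ≤ N)
    {T : ℝ} (huv : u ≤ v) (hT : (v : ℝ) - u ≤ T) :
    ∫ ω, (G u v ω - 1) ^ 4 ∂P ≤ 88 * Real.exp (8 * T) * ((v : ℝ) - u) ^ 2 := by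
  have hd : (0 : ℝ) ≤ (v : ℝ) - u := sub_nonneg.mpr (by exact_mod_cast huv)
  convert exp_fourth_central_moment_le hd hT using 1
  rw [h3.integral_sub_one_pow hN huv]
  norm_num [Finset.sum_range_succ, Nat.choose]
  ring_nf

theorem integral_abs_pow_three_le [IsProbabilityMeasure P] (h3 : Cond3 P G N) (hN : 4 ≤ N)
    (huv : u ≤ v) : ∫ ω, |G u v ω| ^ 3 ∂P ≤ Real.exp (8 * ((v : ℝ) - u)) := by
  have h4 := h3.integrable_pow (n := 4) hN huv
  have hmono : ∫ ω, |G u v ω| ^ 3 ∂P ≤ ∫ ω, 3 / 4 * G u v ω ^ 4 + 1 / 4 ∂P :=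
    integral_mono_of_nonneg (ae_of_all _ fun ω => by positivity)
      ((h4.const_mul _).add (integrable_const _))
      (ae_of_all _ fun ω => by linarith [four_mul_mul_abs_pow_three_le (G u v ω) 1])
  have hd : (0 : ℝ) ≤ (v : ℝ) - u := sub_nonneg.mpr (by exact_mod_cast huv)
  have hexp : 1 ≤ Real.exp (8 * ((v : ℝ) - u)) := Real.one_le_exp (by positivity)
  rw [integral_add (h4.const_mul _) (integrable_const _),
    integral_const_mul, h3.integral_pow hN huv] at hmono
  norm_num at hmono
  linarith

theorem exists_integral_abs_sub_one_pow_three_le [IsProbabilityMeasure P] (h3 : Cond3 P G N)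
    (hN : 4 ≤ N) (T : ℝ) : ∃ K : ℝ, ∀ ⦃u v : ℚ⦄, u < v → (v : ℝ) - u ≤ T →
      ∫ ω, |G u v ω - 1| ^ 3 ∂P ≤ K * ((v : ℝ) - u) ^ ((3 : ℝ) / 2) := by
  refine ⟨(264 * Real.exp (8 * T) + 1) / 4, fun u v huv hT => ?_⟩
  set d : ℝ := (v : ℝ) - u
  have hd : 0 < d := sub_pos.mpr (by exact_mod_cast huv)
  have hb4 : √d ^ 4 = d ^ 2 := by
    rw [show 4 = 2 * 2 by rfl, pow_mul, Real.sq_sqrt hd.le]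
  have hrpow : d ^ ((3 : ℝ) / 2) = d ^ 2 / √d := by
    rw [Real.sqrt_eq_rpow, ← Real.rpow_natCast, ← Real.rpow_sub hd]
    norm_num
  have h4 := h3.integrable_sub_one_pow (n := 4) hN huv.le
  have hmono : ∫ ω, |G u v ω - 1| ^ 3 ∂P ≤ ∫ ω, (3 * (G u v ω - 1) ^ 4 + d ^ 2) / (4 * √d) ∂P := by
    refine integral_mono_of_nonneg (ae_of_all _ fun ω => by positivity)
      (((h4.const_mul 3).add (integrable_const _)).div_const _) (ae_of_all _ fun ω => ?_)
    rw [le_div_iff₀ (by positivity), ← hb4]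
    linarith [four_mul_mul_abs_pow_three_le (G u v ω - 1) √d]
  rw [integral_div, integral_add (h4.const_mul 3) (integrable_const _), integral_const_mul,
    integral_const, probReal_univ, one_smul] at hmono
  calc ∫ ω, |G u v ω - 1| ^ 3 ∂P
      ≤ (3 * ∫ ω, (G u v ω - 1) ^ 4 ∂P + d ^ 2) / (4 * √d) := hmono
    _ ≤ (3 * (88 * Real.exp (8 * T) * d ^ 2) + d ^ 2) / (4 * √d) := by
      gcongr
      exact h3.integral_sub_one_pow_four_le hN huv.le hT
    _ = (264 * Real.exp (8 * T) + 1) / 4 * d ^ ((3 : ℝ) / 2) := by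
      rw [hrpow]
      ring

end Cond3

section Flow

variable {Ω : Type*} [MeasurableSpace Ω] {P : Measure Ω} {G : ℚ → ℚ → Ω → ℝ} {r s t : ℚ}

theorem Cond1.indepFun (h1 : Cond1 P G) (hrs : r < s) (hst : s < t) :
    IndepFun (G r s) (G s t) P := by
  have hdisj : Disjoint (Set.Ioo r s) (Set.Ioo s t) :=
    Set.disjoint_left.mpr fun _ hx hx' => lt_asymm hx.2 hx'.1
  have hind := h1 2 ![r, s] ![s, t] (fun i => by fin_cases i <;> simpa)
    (fun i j hij => by
      fin_cases i <;> fin_cases j <;> simp_all [hdisj.symm])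
  simpa using hind.indepFun (show (0 : Fin 2) ≠ 1 by decide)

theorem integral_abs_flow_increment_pow_eq [IsProbabilityMeasure P] {N : ℕ} (h1 : Cond1 P G)
    (h2 : Cond2 P G) (h3 : Cond3 P G N) (hN : 2 ≤ N) (p : ℕ) (hrs : r ≤ s) (hst : s < t) :
    ∫ ω, |G r t ω - G r s ω| ^ p ∂P = (∫ ω, |G r s ω| ^ p ∂P) * ∫ ω, |G s t ω - 1| ^ p ∂P := by
  rcases hrs.eq_or_lt with rfl | hrs'
  · have hone := h3.ae_eq_one_s4 hN r
    have hinc : ∫ ω, |G r t ω - G r r ω| ^ p ∂P = ∫ ω, |G r t ω - 1| ^ p ∂P :=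
      integral_congr_ae (hone.mono fun ω hω => by simp only [hω, Pi.one_apply])
    have hstart : ∫ ω, |G r r ω| ^ p ∂P = 1 := by
      rw [integral_congr_ae (g := fun _ => (1 : ℝ))
        (hone.mono fun ω hω => by simp only [hω, Pi.one_apply, abs_one, one_pow])]
      simp
    rw [hinc, hstart, one_mul]
  · have hX := h3.aestronglyMeasurable (by lia) hrs
    have hY := h3.aestronglyMeasurable (by lia) hst.le
    have hfactor : ∫ ω, |G r t ω - G r s ω| ^ p ∂P = ∫ ω, |G r s ω| ^ p * |G s t ω - 1| ^ p ∂P :=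
      integral_congr_ae <| (h2 r s t hrs' hst).mono fun ω (hω : G r s ω * G s t ω = G r t ω) => by
        dsimp only
        rw [← hω, ← mul_pow, ← abs_mul, mul_sub_one]
    rw [hfactor]
    exact (h1.indepFun hrs' hst).integral_fun_comp_mul_comp (f := fun x => |x| ^ p)
      (g := fun x => |x - 1| ^ p) hX.aemeasurable hY.aemeasurable
      (by fun_prop) (by fun_prop)

end Flow

theorem geometric_brownian_flow_increment_bound_general
    {Ω : Type*} [MeasurableSpace Ω] (P : Measure Ω) [IsProbabilityMeasure P]
    (G : ℚ → ℚ → Ω → ℝ)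
    (h1 : Cond1 P G) (h2 : Cond2 P G) (h3 : Cond3 P G 6) :
    ∀ T : ℝ, 0 < T → ∃ C : ℝ, ∀ s t : ℚ, 0 ≤ s → s ≤ t → (t : ℝ) ≤ T →
      ∫ ω, |G 0 t ω - G 0 s ω| ^ 3 ∂P ≤ C * ((t : ℝ) - (s : ℝ)) ^ ((3 : ℝ) / 2) := by
  intro T _
  obtain ⟨K, hK⟩ := h3.exists_integral_abs_sub_one_pow_three_le (by norm_num) T
  refine ⟨Real.exp (8 * T) * K, fun s t hs hst htT => ?_⟩
  rcases hst.eq_or_lt with rfl | hst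
  · simp
  have hs' : (0 : ℝ) ≤ s := by exact_mod_cast hs
  have hst' : (s : ℝ) < t := by exact_mod_cast hst
  have hstart : ∫ ω, |G 0 s ω| ^ 3 ∂P ≤ Real.exp (8 * T) :=
    (h3.integral_abs_pow_three_le (by norm_num) hs).trans
      (Real.exp_le_exp.mpr (by push_cast; linarith))
  rw [integral_abs_flow_increment_pow_eq h1 h2 h3 (by norm_num) 3 hs hst, mul_assoc]
  exact mul_le_mul hstart (hK hst (by linarith)) (integral_nonneg fun ω => by positivity)
    (Real.exp_pos _).le

/-- Under conditions (1), (2), (3_6): a third-moment Hölder-1/2 type increment bound,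
`E[|G_{0,t} - G_{0,s}|³] ≤ C_T |t-s|^{3/2}` for rationals `0 ≤ s ≤ t ≤ T`. -/
theorem geometric_brownian_flow_increment_bound
    {Ω : Type*} [MeasurableSpace Ω] (P : Measure Ω) [IsProbabilityMeasure P]
    (G : ℚ → ℚ → Ω → ℝ) (hmeas : ∀ s t : ℚ, Measurable (G s t))
    (h1 : Cond1 P G) (h2 : Cond2 P G) (h3 : Cond3 P G 6) :
    ∀ T : ℝ, 0 < T → ∃ C : ℝ, ∀ s t : ℚ, 0 ≤ s → s ≤ t → (t : ℝ) ≤ T →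
      ∫ ω, |G 0 t ω - G 0 s ω| ^ 3 ∂P ≤ C * ((t : ℝ) - (s : ℝ)) ^ ((3 : ℝ) / 2) :=
  geometric_brownian_flow_increment_bound_general P G h1 h2 h3
end

section
/- Let φ ∈ C_c^∞(ℝ) be even with ∫_ℝ φ = 1, φ not identically zero, and sup_{x ∈ ℝ} (φ*φ)(x) < 1. Then γ_ext² := ∫_ℝ (φ*φ)(a) / (1 − (φ*φ)(a)) da satisfies γ_ext² > 1. -/
open MeasureTheory Filter

/-- Convolution of two real functions on `ℝ` (with respect to Lebesgue measure). -/
noncomputable def conv (f g : ℝ → ℝ) : ℝ → ℝ := fun x => ∫ y, f y * g (x - y)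

/-- For an even nonzero `φ ∈ C_c^∞(ℝ)` of unit integral with `sup (φ*φ) < 1`, the
constant `γ_ext² = ∫ (φ*φ)(a) / (1 - (φ*φ)(a)) da` is strictly greater than `1`. -/
theorem gamma_ext_sq_gt_one
    (φ : ℝ → ℝ) (hφ : ContDiff ℝ (⊤ : ℕ∞) φ) (hsupp : HasCompactSupport φ)
    (heven : ∀ y, φ (-y) = φ y) (hint : (∫ y : ℝ, φ y) = 1) (hne : φ ≠ 0)
    (hsup : (⨆ x : ℝ, conv φ φ x) < 1) :
    1 < ∫ a : ℝ, conv φ φ a / (1 - conv φ φ a) := by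
  set f : ℝ → ℝ := conv φ φ with hf
  have hφc : Continuous φ := hφ.continuous
  have hconv : f = MeasureTheory.convolution φ φ (ContinuousLinearMap.mul ℝ ℝ) volume := by
    rfl
  have hfc : Continuous f := by
    rw [hconv]
    exact hsupp.continuous_convolution_right _ hφc.locallyIntegrable hφc
  have hfs : HasCompactSupport f := by
    rw [hconv]
    exact hsupp.convolution _ hsupp
  have hφint : Integrable φ := hφc.integrable_of_hasCompactSupport hsupp
  -- integral of f equals 1
  have hintf : (∫ a : ℝ, f a) = 1 := by
    rw [hconv, integral_convolution _ hφint hφint, hint]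
    simp
  -- f is everywhere < 1
  have hlt : ∀ x, f x < 1 := by
    intro x
    refine lt_of_le_of_lt ?_ hsup
    exact le_ciSup (hfc.bddAbove_range_of_hasCompactSupport hfs) x
  have hpos1 : ∀ x, 0 < 1 - f x := fun x => by linarith [hlt x]
  -- f 0 > 0
  have hf0 : 0 < f 0 := by
    have : f 0 = ∫ y, φ y ^ 2 := by
      simp only [hf, conv]
      congr 1 with y
      rw [zero_sub, heven y, sq]
    rw [this]
    have hne' : φ ^ 2 ≠ 0 := by
      intro h
      apply hne
      funext y
      have := congrFun h y
      simpa [sq, mul_self_eq_zero] using this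
    have hcont2 : Continuous fun y => φ y ^ 2 := by continuity
    have hcs2 : HasCompactSupport fun y => φ y ^ 2 := by
      apply hsupp.mul_left
    obtain ⟨y, hy⟩ := Function.ne_iff.mp hne'
    exact hcont2.integral_pos_of_hasCompactSupport_nonneg_nonzero (x := y) hcs2
      (fun y => sq_nonneg _) (by simpa using hy)
  -- the remainder g = f^2/(1-f)
  set g : ℝ → ℝ := fun a => f a ^ 2 / (1 - f a) with hg
  have hgc : Continuous g := hfc.pow 2 |>.div (by continuity) fun x => (hpos1 x).ne'
  have hgs : HasCompactSupport g := by
    apply hfs.mono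
    intro x hx
    simp only [hg, Function.mem_support] at hx
    simp only [Function.mem_support]
    intro h
    apply hx
    simp [h]
  have hgnn : 0 ≤ g := fun x => div_nonneg (sq_nonneg _) (hpos1 x).le
  have hg0 : g 0 ≠ 0 := by
    have := div_pos (pow_pos hf0 2) (hpos1 0)
    exact this.ne'
  have hgint : Integrable g := hgc.integrable_of_hasCompactSupport hgs
  have hgpos : 0 < ∫ a, g a := hgc.integral_pos_of_hasCompactSupport_nonneg_nonzero hgs hgnn hg0
  have hfint : Integrable f := hfc.integrable_of_hasCompactSupport hfs
  have key : ∀ a, f a / (1 - f a) = f a + g a := by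
    intro a
    have h := (hpos1 a).ne'
    rw [hg, add_div' _ _ _ h]
    congr 1
    ring
  calc 1 = (∫ a, f a) := hintf.symm
    _ < (∫ a, f a) + ∫ a, g a := by linarith
    _ = ∫ a, (f a + g a) := (integral_add hfint hgint).symm
    _ = ∫ a : ℝ, conv φ φ a / (1 - conv φ φ a) := by
        congr 1 with a
        rw [key a]
end
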